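/- arXiv:math/0310184 — 2 statements merged into one kernel-verified Lean document; each statement's English description precedes it below -/
import Mathlib

section
/- Let ψ ∈ C^∞(ℝⁿ × ℝ) with 0 ≤ ψ ≤ 1, ψ(ξ,τ) = 0 whenever ‖ξ,τ‖ ≤ 1 and ψ(ξ,τ) = 1 whenever ‖ξ,τ‖ ≥ 2, and for ε > 0 set c_ε(ξ,τ) = ψ(εξ, ε^w τ) for (ξ,τ) ∈ ℝⁿ × ℝ. Let q_{m−j} ∈ S_{v,m−j}(U×ℝ^{n+1}) (so that c_ε·q_{m−j} extends by 0 to a smooth function on U × ℝⁿ × ℝ, since c_ε vanishes for ‖ξ,τ‖ ≤ 1/ε). Then for every compact K ⊂ U, all multi-orders α, β ∈ ℕⁿ and every integer k ≥ 0 there is a constant C > 0, independent of ε, such that for all 0 < ε ≤ 1: |∂_x^α ∂_ξ^β ∂_τ^k [c_ε(ξ,τ)·q_{m−j}(x,ξ,τ)]| ≤ C·ε·(1+‖ξ,τ‖)^{m+1−j−|β|−wk} for all x ∈ K and (ξ,τ) ∈ ℝⁿ × ℝ. -/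
noncomputable section

/-- `ℝⁿ` with the Euclidean norm. -/
abbrev En (n : ℕ) : Type := EuclideanSpace ℝ (Fin n)

/-- The total space `ℝⁿ_x × ℝⁿ_ξ × ℂ_τ`. -/
abbrev Pn (n : ℕ) : Type := En n × En n × ℂ

/-- The total space `ℝⁿ_x × ℝⁿ_ξ × ℝ_τ` (real time covariable). -/
abbrev Rn (n : ℕ) : Type := En n × En n × ℝ

/-- The parabolic pseudo-norm `‖ξ,τ‖ = (|ξ|^w + |τ|)^{1/w}`. -/
def pnorm (n w : ℕ) (ξ : En n) (τ : ℂ) : ℝ :=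
  (‖ξ‖ ^ w + ‖τ‖) ^ ((w : ℝ)⁻¹)

/-- Directional (line) derivative along the vector `v`. -/
def pd {V : Type*} [NormedAddCommGroup V] [NormedSpace ℝ V] (v : V) (f : V → ℂ) : V → ℂ :=
  fun p => lineDeriv ℝ f p v

/-- The multi-index partial derivative `∂_x^α` in the first (space) variable. -/
def DxR (n : ℕ) (α : Fin n → ℕ) (f : Rn n → ℂ) : Rn n → ℂ :=
  (List.finRange n).foldr
    (fun i g => (pd ((EuclideanSpace.single i (1 : ℝ) : En n), (0 : En n), (0 : ℝ)))^[α i] g) f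

/-- The multi-index partial derivative `∂_ξ^β` in the second (covariable) variable. -/
def DxiR (n : ℕ) (β : Fin n → ℕ) (f : Rn n → ℂ) : Rn n → ℂ :=
  (List.finRange n).foldr
    (fun i g => (pd ((0 : En n), (EuclideanSpace.single i (1 : ℝ) : En n), (0 : ℝ)))^[β i] g) f

/-- The iterated real partial derivative `∂_τ^k` in the (real) time covariable. -/
def DtR (n : ℕ) (k : ℕ) (f : Rn n → ℂ) : Rn n → ℂ :=
  (pd ((0 : En n), (0 : En n), (1 : ℝ)))^[k] f

/-- `∂_x^α ∂_ξ^β ∂_τ^k` (real time covariable). -/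
def DR (n : ℕ) (α β : Fin n → ℕ) (k : ℕ) (f : Rn n → ℂ) : Rn n → ℂ :=
  DxR n α (DxiR n β (DtR n k f))

/-- The class `S_{v,m'}(U×ℝ^{n+1})` of homogeneous Volterra symbols of degree `m'`:
smooth on `U × ((ℝⁿ × cl C₋) ∖ {0})`, holomorphic in `τ ∈ C₋ = {Im τ < 0}` for fixed `(x,ξ)`,
and (anisotropically) homogeneous of degree `m'`. -/
def HomSym (n w : ℕ) (U : Set (En n)) (m' : ℤ) (q : Pn n → ℂ) : Prop :=
  ContDiffOn ℝ (⊤ : ℕ∞) q {p : Pn n | p.1 ∈ U ∧ p.2.2.im ≤ 0 ∧ p.2 ≠ 0}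
    ∧ (∀ x ∈ U, ∀ ξ : En n,
        DifferentiableOn ℂ (fun τ => q (x, ξ, τ)) {τ : ℂ | τ.im < 0})
    ∧ ∀ x ∈ U, ∀ (ξ : En n) (τ : ℂ), τ.im ≤ 0 → (ξ, τ) ≠ 0 → ∀ l : ℝ, 0 < l →
        q (x, l • ξ, (l ^ w : ℝ) • τ) = (l : ℂ) ^ m' * q (x, ξ, τ)

/-!
Write `F = ψ q` (the cut-off symbol at `ε = 1`) and `δ_c (x, ξ, t) = (x, c ξ, c ^ w t)`.
Homogeneity of `q` gives `c_ε q = ε ^ (j - m) F ∘ δ_ε`, hence, with `D = ∂_x^α ∂_ξ^β ∂_τ^k`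
and `d = m - j - |β| - w k`, `D (c_ε q) = ε ^ (-d) (D F) ∘ δ_ε`. Now `D F` vanishes where
`‖ξ,t‖ < 1`, is bounded on the compact shell `x ∈ K, 1 ≤ ‖ξ,t‖ ≤ 3`, and is homogeneous of
degree `d` where `ψ = 1`; so `|D F| ≤ M ‖ξ,t‖ ^ d` wherever `‖ξ,t‖ ≥ 1`. At a point with
`ε ‖ξ,t‖ ≥ 1` this yields `|D (c_ε q)| ≤ M ‖ξ,t‖ ^ d ≤ M ε ‖ξ,t‖ ^ (d + 1)`: the factor `ε`
comes from `‖ξ,t‖⁻¹ ≤ ε`.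
-/

open Set Filter Topology

section LineDerivOperators

variable {V W : Type*} [NormedAddCommGroup V] [NormedSpace ℝ V]
  [NormedAddCommGroup W] [NormedSpace ℝ W] {ι : Type*}

lemma pd_const_mul (v : V) (γ : ℂ) (f : V → ℂ) :
    pd v (fun p => γ * f p) = fun p => γ * pd v f p := by
  funext p
  exact deriv_const_mul_field γ

lemma pd_smul (c : ℝ) (v : V) (f : V → ℂ) : pd (c • v) f = fun p => (c : ℂ) * pd v f p := by
  funext p
  rw [pd, lineDeriv_smul, Complex.real_smul]
  rfl

lemma pd_comp_linearMap (L : V →ₗ[ℝ] W) (v : V) (f : W → ℂ) :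
    pd v (f ∘ L) = pd (L v) f ∘ L := by
  funext p
  simp [pd, lineDeriv]

lemma Set.EqOn.pd_of_isOpen {O : Set V} (hO : IsOpen O) (v : V) {f g : V → ℂ}
    (h : EqOn f g O) : EqOn (pd v f) (pd v g) O :=
  fun _ hp => (h.eventuallyEq_of_mem (hO.mem_nhds hp)).lineDeriv_eq

lemma ContDiffOn.pd_of_isOpen {O : Set V} (hO : IsOpen O) (v : V) {f : V → ℂ}
    (hf : ContDiffOn ℝ (⊤ : ℕ∞) f O) : ContDiffOn ℝ (⊤ : ℕ∞) (pd v f) O := by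
  refine ((hf.fderiv_of_isOpen hO (by exact_mod_cast le_top)).clm_apply
    (contDiffOn_const (c := v))).congr fun p hp => ?_
  exact ((hf.contDiffAt (hO.mem_nhds hp)).differentiableAt (by simp)).lineDeriv_eq_fderiv

/-- `∏_{i ∈ L} ∂_{v i}^{μ i}`; `DxR`, `DxiR` and `DtR` are of this form. -/
def pdFold (v : ι → V) (μ : ι → ℕ) (L : List ι) (f : V → ℂ) : V → ℂ :=
  L.foldr (fun i g => (pd (v i))^[μ i] g) f

lemma pdFold_rel {R : (W → ℂ) → (V → ℂ) → Prop} (v : ι → W) (v' : ι → V)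
    (hR : ∀ i f g, R f g → R (pd (v i) f) (pd (v' i) g)) (μ : ι → ℕ) (L : List ι)
    {f : W → ℂ} {g : V → ℂ} (h : R f g) : R (pdFold v μ L f) (pdFold v' μ L g) := by
  induction L with
  | nil => exact h
  | cons i L ih =>
    show R ((pd (v i))^[μ i] (pdFold v μ L f)) ((pd (v' i))^[μ i] (pdFold v' μ L g))
    generalize μ i = N
    induction N with
    | zero => exact ih
    | succ N ihN =>
      rw [Function.iterate_succ_apply', Function.iterate_succ_apply']
      exact hR i _ _ ihN

lemma pdFold_const_mul (v : ι → V) (μ : ι → ℕ) (L : List ι) (γ : ℂ) (f : V → ℂ) :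
    pdFold v μ L (fun p => γ * f p) = fun p => γ * pdFold v μ L f p :=
  pdFold_rel (R := fun f g => g = fun p => γ * f p) v v
    (fun i f _ h => h ▸ pd_const_mul (v i) γ f) μ L (f := f) rfl

lemma pdFold_comp_linearMap (L : V →ₗ[ℝ] W) (v : ι → V) (μ : ι → ℕ) (Ls : List ι)
    (f : W → ℂ) : pdFold v μ Ls (f ∘ L) = pdFold (L ∘ v) μ Ls f ∘ L :=
  pdFold_rel (R := fun f g => g = f ∘ L) (L ∘ v) v
    (fun i f _ h => h ▸ pd_comp_linearMap L (v i) f) μ Ls rfl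

lemma iterate_pd_const_mul (v : V) (N : ℕ) (γ : ℂ) (f : V → ℂ) :
    (pd v)^[N] (fun p => γ * f p) = fun p => γ * (pd v)^[N] f p :=
  pdFold_const_mul (fun _ : Unit => v) (fun _ => N) [()] γ f

lemma iterate_pd_smul (c : ℝ) (v : V) (N : ℕ) (f : V → ℂ) :
    (pd (c • v))^[N] f = fun p => (c : ℂ) ^ N * (pd v)^[N] f p := by
  induction N with
  | zero => simp
  | succ N ih =>
    rw [Function.iterate_succ_apply', ih, pd_smul, pd_const_mul, Function.iterate_succ_apply']
    funext p
    ring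

lemma pdFold_smul (c : ℝ) (v : ι → V) (μ : ι → ℕ) (L : List ι) (f : V → ℂ) :
    pdFold (fun i => c • v i) μ L f = fun p => (c : ℂ) ^ (L.map μ).sum * pdFold v μ L f p := by
  induction L with
  | nil => funext p; simp [pdFold]
  | cons i L ih =>
    show (pd (c • v i))^[μ i] (pdFold _ μ L f) = _
    rw [ih, iterate_pd_smul, iterate_pd_const_mul]
    funext p
    simp only [List.map_cons, List.sum_cons, pow_add, mul_assoc]
    rfl

end LineDerivOperators

section PartialDerivatives

variable {n : ℕ} (α β : Fin n → ℕ) (k : ℕ)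

lemma DR_eq_pdFold (f : Rn n → ℂ) :
    DR n α β k f =
      pdFold (fun i => ((EuclideanSpace.single i (1 : ℝ) : En n), (0 : En n), (0 : ℝ))) α
        (List.finRange n)
        (pdFold (fun i => ((0 : En n), (EuclideanSpace.single i (1 : ℝ) : En n), (0 : ℝ))) β
          (List.finRange n)
          (pdFold (fun _ : Unit => ((0 : En n), (0 : En n), (1 : ℝ))) (fun _ => k) [()] f)) :=
  rfl

lemma DR_rel {R : (Rn n → ℂ) → (Rn n → ℂ) → Prop}
    (hR : ∀ v f g, R f g → R (pd v f) (pd v g)) {f g : Rn n → ℂ} (h : R f g) :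
    R (DR n α β k f) (DR n α β k g) := by
  simp only [DR_eq_pdFold]
  exact pdFold_rel _ _ (fun _ => hR _) _ _ <| pdFold_rel _ _ (fun _ => hR _) _ _ <|
    pdFold_rel _ _ (fun _ => hR _) _ _ h

lemma DR_const_mul (γ : ℂ) (f : Rn n → ℂ) :
    DR n α β k (fun p => γ * f p) = fun p => γ * DR n α β k f p :=
  DR_rel (R := fun f g => g = fun p => γ * f p) α β k
    (fun v f _ h => h ▸ pd_const_mul v γ f) (f := f) rfl

lemma Set.EqOn.DR_of_isOpen {O : Set (Rn n)} (hO : IsOpen O) {f g : Rn n → ℂ}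
    (h : EqOn f g O) : EqOn (DR n α β k f) (DR n α β k g) O :=
  DR_rel (R := fun f g => EqOn f g O) α β k (fun v _ _ h => h.pd_of_isOpen hO v) h

lemma ContDiffOn.DR_of_isOpen {O : Set (Rn n)} (hO : IsOpen O) {f : Rn n → ℂ}
    (hf : ContDiffOn ℝ (⊤ : ℕ∞) f O) : ContDiffOn ℝ (⊤ : ℕ∞) (DR n α β k f) O :=
  DR_rel (R := fun f (_ : Rn n → ℂ) => ContDiffOn ℝ (⊤ : ℕ∞) f O) α β k
    (fun v _ _ h => h.pd_of_isOpen hO v) (g := f) hf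

end PartialDerivatives

def parabolicDilation (n w : ℕ) (c : ℝ) : Rn n →ₗ[ℝ] Rn n :=
  LinearMap.id.prodMap ((c • LinearMap.id).prodMap ((c ^ w) • LinearMap.id))

section Dilation

variable {n w : ℕ} (α β : Fin n → ℕ) (k : ℕ)

lemma parabolicDilation_apply (c : ℝ) (p : Rn n) :
    parabolicDilation n w c p = (p.1, c • p.2.1, c ^ w * p.2.2) :=
  rfl

lemma DR_comp_parabolicDilation (c : ℝ) (f : Rn n → ℂ) :
    DR n α β k (f ∘ parabolicDilation n w c) = fun p =>
      (c : ℂ) ^ (∑ i, β i) * ((c ^ w : ℝ) : ℂ) ^ k * DR n α β k f (parabolicDilation n w c p) := by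
  simp only [DR_eq_pdFold, pdFold_comp_linearMap]
  have hx : (⇑(parabolicDilation n w c) ∘ fun i =>
      ((EuclideanSpace.single i (1 : ℝ) : En n), (0 : En n), (0 : ℝ))) =
      fun i => ((EuclideanSpace.single i (1 : ℝ) : En n), (0 : En n), (0 : ℝ)) := by
    funext i; simp [parabolicDilation_apply]
  have hξ : (⇑(parabolicDilation n w c) ∘ fun i =>
      ((0 : En n), (EuclideanSpace.single i (1 : ℝ) : En n), (0 : ℝ))) =
      fun i => c • ((0 : En n), (EuclideanSpace.single i (1 : ℝ) : En n), (0 : ℝ)) := by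
    funext i; simp [parabolicDilation_apply]
  have ht : (⇑(parabolicDilation n w c) ∘ fun _ : Unit => ((0 : En n), (0 : En n), (1 : ℝ))) =
      fun _ => (c ^ w) • ((0 : En n), (0 : En n), (1 : ℝ)) := by
    funext _; simp [parabolicDilation_apply]
  rw [hx, hξ, ht, pdFold_smul, pdFold_const_mul, pdFold_smul, pdFold_const_mul, pdFold_const_mul]
  funext p
  simp only [Function.comp_apply, ← Fin.sum_univ_def, List.map_cons, List.map_nil,
    List.sum_cons, List.sum_nil, add_zero]
  ring

lemma norm_DR_comp_parabolicDilation_of_eqOn {O : Set (Rn n)} (hO : IsOpen O) {c : ℝ}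
    (hc : 0 < c) {m' : ℤ} {F f : Rn n → ℂ}
    (h : EqOn (F ∘ parabolicDilation n w c) (fun p => (c : ℂ) ^ m' * f p) O) {p : Rn n}
    (hp : p ∈ O) :
    ‖DR n α β k F (parabolicDilation n w c p)‖ =
      c ^ (m' - ∑ i, (β i : ℤ) - w * k) * ‖DR n α β k f p‖ := by
  have hD := congrArg norm (h.DR_of_isOpen α β k hO hp)
  rw [DR_comp_parabolicDilation, DR_const_mul] at hD
  simp only [norm_mul, norm_pow, norm_zpow, Complex.norm_real, Real.norm_eq_abs,
    abs_of_pos hc] at hD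
  rw [sub_sub, zpow_sub₀ hc.ne', div_mul_eq_mul_div, eq_div_iff (by positivity), ← hD]
  rw [show ∑ i, (β i : ℤ) + w * k = ((∑ i, β i + w * k : ℕ) : ℤ) by push_cast; ring,
    zpow_natCast, pow_add, pow_mul]
  ring

end Dilation

section ParabolicNorm

variable {n w : ℕ}

lemma pnorm_nonneg (ξ : En n) (τ : ℂ) : 0 ≤ pnorm n w ξ τ :=
  Real.rpow_nonneg (by positivity) _

lemma pnorm_pow (hw : w ≠ 0) (ξ : En n) (τ : ℂ) : pnorm n w ξ τ ^ w = ‖ξ‖ ^ w + ‖τ‖ :=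
  Real.rpow_inv_natCast_pow (by positivity) hw

lemma norm_le_pnorm (hw : w ≠ 0) (ξ : En n) (τ : ℂ) : ‖ξ‖ ≤ pnorm n w ξ τ := by
  rw [← pow_le_pow_iff_left₀ (norm_nonneg ξ) (pnorm_nonneg ξ τ) hw, pnorm_pow hw]
  exact le_add_of_nonneg_right (norm_nonneg τ)

lemma norm_le_pnorm_pow (hw : w ≠ 0) (ξ : En n) (τ : ℂ) : ‖τ‖ ≤ pnorm n w ξ τ ^ w := by
  rw [pnorm_pow hw]
  exact le_add_of_nonneg_left (by positivity)

lemma pnorm_zero (hw : w ≠ 0) : pnorm n w 0 0 = 0 := by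
  simp [pnorm, zero_pow hw, Real.zero_rpow (inv_ne_zero (Nat.cast_ne_zero.2 hw))]

lemma pnorm_smul_ofReal (hw : w ≠ 0) {c : ℝ} (hc : 0 ≤ c) (ξ : En n) (t : ℝ) :
    pnorm n w (c • ξ) ((c ^ w * t : ℝ) : ℂ) = c * pnorm n w ξ t := by
  rw [← pow_left_inj₀ (pnorm_nonneg _ _) (mul_nonneg hc (pnorm_nonneg _ _)) hw, mul_pow,
    pnorm_pow hw, pnorm_pow hw, norm_smul, Complex.norm_real, Complex.norm_real, norm_mul,
    Real.norm_of_nonneg hc, Real.norm_of_nonneg (pow_nonneg hc w)]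
  ring

lemma continuous_pnorm : Continuous fun z : En n × ℝ => pnorm n w z.1 z.2 :=
  (continuous_fst.norm.pow w |>.add (Complex.continuous_ofReal.comp continuous_snd).norm).rpow_const
    fun _ => Or.inr (by positivity)

lemma isCompact_pnorm_le (hw : w ≠ 0) (R : ℝ) :
    IsCompact {z : En n × ℝ | pnorm n w z.1 z.2 ≤ R} := by
  refine Metric.isCompact_of_isClosed_isBounded (isClosed_le continuous_pnorm continuous_const) ?_
  refine isBounded_iff_forall_norm_le.2 ⟨max R (R ^ w), fun z hz => ?_⟩
  have hz₀ : 0 ≤ pnorm n w z.1 z.2 := pnorm_nonneg _ _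
  rw [Prod.norm_def]
  refine max_le_max ((norm_le_pnorm hw _ _).trans hz) ?_
  calc ‖z.2‖ = ‖(z.2 : ℂ)‖ := (Complex.norm_real _).symm
    _ ≤ pnorm n w z.1 z.2 ^ w := norm_le_pnorm_pow hw _ _
    _ ≤ R ^ w := pow_le_pow_left₀ hz₀ hz w

lemma isOpen_pnorm_lt (r : ℝ) : IsOpen {p : Rn n | pnorm n w p.2.1 p.2.2 < r} :=
  isOpen_lt (continuous_pnorm.comp continuous_snd) continuous_const

lemma pnorm_parabolicDilation (hw : w ≠ 0) {c : ℝ} (hc : 0 ≤ c) (p : Rn n) :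
    pnorm n w (parabolicDilation n w c p).2.1 (parabolicDilation n w c p).2.2 =
      c * pnorm n w p.2.1 p.2.2 :=
  pnorm_smul_ofReal hw hc p.2.1 p.2.2

end ParabolicNorm

lemma zpow_le_pow_abs_mul_zpow {a b R : ℝ} (e : ℤ) (ha : 0 < a) (hab : a ≤ b)
    (hbR : b ≤ R * a) : a ^ e ≤ R ^ |e| * b ^ e := by
  have hR : 1 ≤ R := le_of_mul_le_mul_right (by linarith) ha
  have hb : 0 < b := ha.trans_le hab
  rcases le_total 0 e with he | he
  · calc a ^ e ≤ b ^ e := zpow_le_zpow_left₀ he ha.le hab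
      _ ≤ R ^ |e| * b ^ e := le_mul_of_one_le_left (by positivity) (one_le_zpow₀ hR (abs_nonneg e))
  · have hRa : (R * a) ^ e ≤ b ^ e := by
      have := zpow_le_zpow_left₀ (neg_nonneg.2 he) hb.le hbR
      rwa [zpow_neg, zpow_neg, inv_le_inv₀ (by positivity) (by positivity)] at this
    calc a ^ e = R ^ |e| * (R * a) ^ e := by
          rw [abs_of_nonpos he, mul_zpow, ← mul_assoc, ← zpow_add₀ (by positivity), neg_add_cancel,
            zpow_zero, one_mul]
      _ ≤ R ^ |e| * b ^ e := by gcongr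

lemma zpow_le_mul_one_add_zpow_add_one {ε P : ℝ} (d : ℤ) (hε : 0 < ε) (hε1 : ε ≤ 1)
    (hεP : 1 ≤ ε * P) : P ^ d ≤ 2 ^ |d + 1| * ε * (1 + P) ^ (d + 1) := by
  have hP : 1 ≤ P := by nlinarith
  have hP0 : 0 < P := by linarith
  calc P ^ d = P ^ (d + 1) * P⁻¹ := by rw [zpow_add_one₀ hP0.ne', mul_inv_cancel_right₀ hP0.ne']
    _ ≤ (2 ^ |d + 1| * (1 + P) ^ (d + 1)) * ε := by
        gcongr
        · exact zpow_le_pow_abs_mul_zpow (d + 1) hP0 (by linarith) (by linarith)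
        · rwa [inv_le_iff_one_le_mul₀ hP0]
    _ = 2 ^ |d + 1| * ε * (1 + P) ^ (d + 1) := by ring

/-- The symbol `c_ε q_{m-j}` at `ε = 1`. -/
def cutoffSymbol {n : ℕ} (ψ : En n × ℝ → ℝ) (q : Pn n → ℂ) : Rn n → ℂ :=
  fun p => (ψ p.2 : ℂ) * q (p.1, p.2.1, p.2.2)

section CutoffSymbol

variable {n w : ℕ} {U : Set (En n)} {ψ : En n × ℝ → ℝ} {q : Pn n → ℂ}

lemma HomSym.apply_parabolicDilation {m' : ℤ} (hq : HomSym n w U m' q) {p : Rn n}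
    (hp : p.1 ∈ U) (hp0 : p.2 ≠ 0) {l : ℝ} (hl : 0 < l) :
    q (p.1, l • p.2.1, ((l ^ w * p.2.2 : ℝ) : ℂ)) = (l : ℂ) ^ m' * q (p.1, p.2.1, p.2.2) := by
  have hne : (p.2.1, (p.2.2 : ℂ)) ≠ 0 := by
    simpa [Prod.ext_iff] using hp0
  rw [← hq.2.2 p.1 hp p.2.1 p.2.2 (by simp) hne l hl, Complex.real_smul]
  push_cast
  rfl

lemma cutoffSymbol_eq_zero (hψ0 : ∀ z : En n × ℝ, pnorm n w z.1 z.2 ≤ 1 → ψ z = 0) {p : Rn n}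
    (hp : pnorm n w p.2.1 p.2.2 ≤ 1) : cutoffSymbol ψ q p = 0 := by
  simp [cutoffSymbol, hψ0 p.2 hp]

lemma contDiffOn_cutoffSymbol (hw : w ≠ 0) (hU : IsOpen U) (hψ : ContDiff ℝ (⊤ : ℕ∞) ψ)
    (hψ0 : ∀ z : En n × ℝ, pnorm n w z.1 z.2 ≤ 1 → ψ z = 0)
    (hq : ContDiffOn ℝ (⊤ : ℕ∞) q {p : Pn n | p.1 ∈ U ∧ p.2.2.im ≤ 0 ∧ p.2 ≠ 0}) :
    ContDiffOn ℝ (⊤ : ℕ∞) (cutoffSymbol ψ q) {p : Rn n | p.1 ∈ U} := by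
  intro p hp
  by_cases hp1 : pnorm n w p.2.1 p.2.2 < 1
  · have hzero : cutoffSymbol ψ q =ᶠ[𝓝 p] fun _ => 0 :=
      eventually_of_mem ((isOpen_pnorm_lt 1).mem_nhds hp1) fun r hr =>
        cutoffSymbol_eq_zero hψ0 (le_of_lt hr)
    exact (contDiffAt_const.congr_of_eventuallyEq hzero).contDiffWithinAt
  have hp0 : p.2 ≠ 0 := fun h => hp1 (by simp [h, pnorm_zero hw])
  have hO : IsOpen {p : Rn n | p.1 ∈ U ∧ p.2 ≠ 0} :=
    (hU.preimage continuous_fst).inter (isOpen_ne_fun continuous_snd continuous_const)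
  have hemb : ContDiff ℝ (⊤ : ℕ∞) fun p : Rn n => ((p.1, p.2.1, (p.2.2 : ℂ)) : Pn n) :=
    contDiff_fst.prodMk ((contDiff_fst.comp contDiff_snd).prodMk
      (Complex.ofRealCLM.contDiff.comp (contDiff_snd.comp contDiff_snd)))
  have hqe : ContDiffOn ℝ (⊤ : ℕ∞) (fun p : Rn n => q (p.1, p.2.1, p.2.2))
      {p : Rn n | p.1 ∈ U ∧ p.2 ≠ 0} :=
    hq.comp hemb.contDiffOn fun r hr => ⟨hr.1, by simp, by simpa [Prod.ext_iff] using hr.2⟩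
  exact ((Complex.ofRealCLM.contDiff.comp (hψ.comp contDiff_snd)).contDiffOn.mul hqe).contDiffAt
    (hO.mem_nhds ⟨hp, hp0⟩) |>.contDiffWithinAt

end CutoffSymbol

section CutoffSymbolDilation

variable {n w : ℕ} {U : Set (En n)} {ψ : En n × ℝ → ℝ} {q : Pn n → ℂ} {m' : ℤ}

lemma cutoffSymbol_comp_parabolicDilation (hw : w ≠ 0)
    (hψ1 : ∀ z : En n × ℝ, 2 ≤ pnorm n w z.1 z.2 → ψ z = 1) (hq : HomSym n w U m' q)
    {l : ℝ} (hl : 1 ≤ l) :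
    EqOn (cutoffSymbol ψ q ∘ parabolicDilation n w l) (fun p => (l : ℂ) ^ m' * cutoffSymbol ψ q p)
      {p : Rn n | p.1 ∈ U ∧ 2 < pnorm n w p.2.1 p.2.2} := by
  rintro p ⟨hpU, hp2⟩
  have hp0 : p.2 ≠ 0 := fun h => by simp [h, pnorm_zero hw] at hp2; linarith
  have hψl : ψ (l • p.2.1, l ^ w * p.2.2) = 1 := hψ1 _ <| by
    rw [pnorm_smul_ofReal hw (by linarith)]
    nlinarith [pnorm_nonneg (w := w) p.2.1 p.2.2]
  have hql := hq.apply_parabolicDilation hpU hp0 (l := l) (by linarith)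
  simp only [Function.comp_apply, parabolicDilation_apply, cutoffSymbol, hψl, hψ1 p.2 hp2.le, hql]
  ring

lemma cutoffSymbol_comp_parabolicDilation_eqOn_rescaled (hw : w ≠ 0)
    (hψ0 : ∀ z : En n × ℝ, pnorm n w z.1 z.2 ≤ 1 → ψ z = 0) (hq : HomSym n w U m' q)
    {ε : ℝ} (hε : 0 < ε) :
    EqOn (cutoffSymbol ψ q ∘ parabolicDilation n w ε)
      (fun p => (ε : ℂ) ^ m' * (((ψ (ε • p.2.1, ε ^ w * p.2.2) : ℝ) : ℂ) * q (p.1, p.2.1, p.2.2)))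
      {p : Rn n | p.1 ∈ U} := by
  intro p hpU
  by_cases hp0 : p.2 = 0
  · have hψε : ψ (ε • p.2.1, ε ^ w * p.2.2) = 0 := hψ0 _ <| by
      simp [hp0, pnorm_zero hw]
    simp [cutoffSymbol, parabolicDilation_apply, hψε]
  · simp only [Function.comp_apply, parabolicDilation_apply, cutoffSymbol,
      hq.apply_parabolicDilation hpU hp0 hε]
    ring

lemma DR_cutoffSymbol_eq_zero (hψ0 : ∀ z : En n × ℝ, pnorm n w z.1 z.2 ≤ 1 → ψ z = 0)
    (α β : Fin n → ℕ) (k : ℕ) {p : Rn n} (hp : pnorm n w p.2.1 p.2.2 < 1) :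
    DR n α β k (cutoffSymbol ψ q) p = 0 := by
  have h : EqOn (cutoffSymbol ψ q) (fun p => 0 * cutoffSymbol ψ q p)
      {p : Rn n | pnorm n w p.2.1 p.2.2 < 1} := fun r hr => by
    simp [cutoffSymbol_eq_zero hψ0 (le_of_lt hr)]
  rw [h.DR_of_isOpen α β k (isOpen_pnorm_lt 1) hp, DR_const_mul]
  exact zero_mul _

end CutoffSymbolDilation

lemma exists_norm_le_mul_pnorm_zpow {n w : ℕ} (hw : w ≠ 0) {K : Set (En n)} (hK : IsCompact K)
    {G : Rn n → ℂ} (hG : ContinuousOn G {p : Rn n | p.1 ∈ K}) (d : ℤ)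
    (hhom : ∀ l : ℝ, 1 ≤ l → ∀ p : Rn n, p.1 ∈ K → 2 < pnorm n w p.2.1 p.2.2 →
      ‖G (parabolicDilation n w l p)‖ = l ^ d * ‖G p‖) :
    ∃ M > 0, ∀ p : Rn n, p.1 ∈ K → 1 ≤ pnorm n w p.2.1 p.2.2 →
      ‖G p‖ ≤ M * pnorm n w p.2.1 p.2.2 ^ d := by
  obtain ⟨M, hM⟩ := (hK.prod (isCompact_pnorm_le hw 3)).exists_bound_of_continuousOn
    (hG.mono fun _ hp => hp.1)
  have hshell : ∀ r : Rn n, r.1 ∈ K → pnorm n w r.2.1 r.2.2 ≤ 3 → ‖G r‖ ≤ max M 1 :=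
    fun r hrK hr3 => (hM r ⟨hrK, hr3⟩).trans (le_max_left _ _)
  refine ⟨max M 1 * 3 ^ |d|, by positivity, fun p hpK hp1 => ?_⟩
  set ρ := pnorm n w p.2.1 p.2.2
  rcases le_or_gt ρ 3 with hρ3 | hρ3
  · calc ‖G p‖ ≤ max M 1 * 1 ^ d := by simpa using hshell p hpK hρ3
      _ ≤ max M 1 * (3 ^ |d| * ρ ^ d) := by
          gcongr
          exact zpow_le_pow_abs_mul_zpow d one_pos hp1 (by linarith)
      _ = max M 1 * 3 ^ |d| * ρ ^ d := by ring
  set l := ρ / 3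
  have hρl : ρ = 3 * l := (mul_div_cancel₀ ρ three_ne_zero).symm
  have hl : 1 ≤ l := by linarith
  have hl0 : 0 < l := by linarith
  set p₀ := parabolicDilation n w l⁻¹ p
  have hp₀ : pnorm n w p₀.2.1 p₀.2.2 = 3 := by
    rw [pnorm_parabolicDilation hw (inv_nonneg.2 hl0.le)]
    change l⁻¹ * ρ = 3
    rw [hρl]
    field_simp
  have hpp₀ : parabolicDilation n w l p₀ = p := by
    simp [p₀, parabolicDilation_apply, smul_smul, hl0.ne']
  calc ‖G p‖ = l ^ d * ‖G p₀‖ := by rw [← hhom l hl p₀ hpK (by rw [hp₀]; norm_num), hpp₀]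
    _ ≤ (3 ^ |d| * ρ ^ d) * max M 1 := by
        gcongr
        · exact zpow_le_pow_abs_mul_zpow d hl0 (by linarith) hρl.le
        · exact hshell p₀ hpK hp₀.le
    _ = max M 1 * 3 ^ |d| * ρ ^ d := by ring

lemma exists_norm_DR_cutoffSymbol_le {n w : ℕ} (hw : w ≠ 0) {U : Set (En n)} (hU : IsOpen U)
    {ψ : En n × ℝ → ℝ} (hψ : ContDiff ℝ (⊤ : ℕ∞) ψ)
    (hψ0 : ∀ z : En n × ℝ, pnorm n w z.1 z.2 ≤ 1 → ψ z = 0)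
    (hψ1 : ∀ z : En n × ℝ, 2 ≤ pnorm n w z.1 z.2 → ψ z = 1) {q : Pn n → ℂ} {m' : ℤ}
    (hq : HomSym n w U m' q) {K : Set (En n)} (hK : IsCompact K) (hKU : K ⊆ U)
    (α β : Fin n → ℕ) (k : ℕ) :
    ∃ M > 0, ∀ p : Rn n, p.1 ∈ K → 1 ≤ pnorm n w p.2.1 p.2.2 →
      ‖DR n α β k (cutoffSymbol ψ q) p‖ ≤
        M * pnorm n w p.2.1 p.2.2 ^ (m' - ∑ i, (β i : ℤ) - w * k) := by
  have hUopen : IsOpen {p : Rn n | p.1 ∈ U} := hU.preimage continuous_fst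
  have hG := (contDiffOn_cutoffSymbol hw hU hψ hψ0 hq.1).DR_of_isOpen α β k hUopen
  exact exists_norm_le_mul_pnorm_zpow hw hK (hG.continuousOn.mono fun _ hp => hKU hp) _
    fun l hl p hpK hp2 => norm_DR_comp_parabolicDilation_of_eqOn α β k
      (hUopen.inter (isOpen_lt continuous_const (continuous_pnorm.comp continuous_snd)))
      (by linarith) (cutoffSymbol_comp_parabolicDilation hw hψ1 hq hl) ⟨hKU hpK, hp2⟩

theorem stmt10_general (n w : ℕ) (hw2 : 2 ≤ w)
    (U : Set (En n)) (hU : IsOpen U) (m : ℤ) (j : ℕ)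
    (ψ : En n × ℝ → ℝ) (hψ : ContDiff ℝ (⊤ : ℕ∞) ψ)
    (hψ0 : ∀ p : En n × ℝ, pnorm n w p.1 (p.2 : ℂ) ≤ 1 → ψ p = 0)
    (hψ1 : ∀ p : En n × ℝ, 2 ≤ pnorm n w p.1 (p.2 : ℂ) → ψ p = 1)
    (q : Pn n → ℂ) (hq : HomSym n w U (m - (j : ℤ)) q)
    (K : Set (En n)) (hK : IsCompact K) (hKU : K ⊆ U)
    (α β : Fin n → ℕ) (k : ℕ) :
    ∃ C > (0 : ℝ), ∀ ε : ℝ, 0 < ε → ε ≤ 1 → ∀ x ∈ K, ∀ (ξ : En n) (t : ℝ),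
      ‖(DR n α β k
            (fun p => ((ψ (ε • p.2.1, ε ^ w * p.2.2) : ℝ) : ℂ) * q (p.1, p.2.1, (p.2.2 : ℂ)))
            (x, ξ, t))‖
        ≤ C * ε * (1 + pnorm n w ξ (t : ℂ))
            ^ (m + 1 - (j : ℤ) - (∑ i, (β i : ℤ)) - (w : ℤ) * (k : ℤ)) := by
  have hw0 : w ≠ 0 := by omega
  set d : ℤ := m - (j : ℤ) - ∑ i, (β i : ℤ) - w * k
  obtain ⟨M, hM, hMG⟩ := exists_norm_DR_cutoffSymbol_le hw0 hU hψ hψ0 hψ1 hq hK hKU α β k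
  refine ⟨M * 2 ^ |d + 1|, by positivity, fun ε hε hε1 x hx ξ t => ?_⟩
  have hscale := norm_DR_comp_parabolicDilation_of_eqOn α β k (hU.preimage continuous_fst) hε
    (cutoffSymbol_comp_parabolicDilation_eqOn_rescaled hw0 hψ0 hq hε) (p := (x, ξ, t)) (hKU hx)
  have hρ := pnorm_parabolicDilation hw0 hε.le (x, ξ, t)
  set P := pnorm n w ξ t
  rw [show m + 1 - (j : ℤ) - ∑ i, (β i : ℤ) - w * k = d + 1 by ring]
  rcases lt_or_ge (ε * P) 1 with hsmall | hlarge
  · rw [DR_cutoffSymbol_eq_zero hψ0 α β k (hρ ▸ hsmall), norm_zero, eq_comm,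
      mul_eq_zero_iff_left (zpow_pos hε d).ne'] at hscale
    rw [hscale]
    have hP : 0 ≤ P := pnorm_nonneg ξ t
    exact mul_nonneg (by positivity) (zpow_nonneg (by linarith) _)
  refine le_of_mul_le_mul_left ?_ (zpow_pos hε d)
  calc ε ^ d * ‖_‖ = ‖DR n α β k (cutoffSymbol ψ q) (parabolicDilation n w ε (x, ξ, t))‖ :=
        hscale.symm
    _ ≤ M * (ε * P) ^ d := hρ ▸ hMG _ hx (hρ ▸ hlarge)
    _ = ε ^ d * (M * P ^ d) := by rw [mul_zpow]; ring
    _ ≤ ε ^ d * (M * (2 ^ |d + 1| * ε * (1 + P) ^ (d + 1))) := by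
        gcongr
        exact zpow_le_mul_one_add_zpow_add_one d hε hε1 hlarge
    _ = ε ^ d * (M * 2 ^ |d + 1| * ε * (1 + P) ^ (d + 1)) := by ring

/-- Cut-off estimates: with `ψ ∈ C^∞(ℝⁿ×ℝ)`, `0 ≤ ψ ≤ 1`, `ψ = 0` for `‖ξ,τ‖ ≤ 1`, `ψ = 1`
for `‖ξ,τ‖ ≥ 2`, and `c_ε(ξ,τ) = ψ(εξ, ε^w τ)`, for any `q_{m−j} ∈ S_{v,m−j}(U×ℝ^{n+1})`
and any compact `K ⊂ U`, `α`, `β`, `k` there is `C > 0`, independent of `ε`, with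
`|∂_x^α ∂_ξ^β ∂_τ^k [c_ε·q_{m−j}]| ≤ C·ε·(1+‖ξ,τ‖)^{m+1−j−|β|−wk}` for all `0 < ε ≤ 1`,
`x ∈ K` and `(ξ,τ) ∈ ℝⁿ × ℝ`. -/
theorem stmt10 (n w : ℕ) (hn : 1 ≤ n) (hw : Even w) (hw2 : 2 ≤ w)
    (U : Set (En n)) (hU : IsOpen U) (m : ℤ) (j : ℕ)
    (ψ : En n × ℝ → ℝ) (hψ : ContDiff ℝ (⊤ : ℕ∞) ψ)
    (hψ01 : ∀ p : En n × ℝ, 0 ≤ ψ p ∧ ψ p ≤ 1)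
    (hψ0 : ∀ p : En n × ℝ, pnorm n w p.1 (p.2 : ℂ) ≤ 1 → ψ p = 0)
    (hψ1 : ∀ p : En n × ℝ, 2 ≤ pnorm n w p.1 (p.2 : ℂ) → ψ p = 1)
    (q : Pn n → ℂ) (hq : HomSym n w U (m - (j : ℤ)) q)
    (K : Set (En n)) (hK : IsCompact K) (hKU : K ⊆ U)
    (α β : Fin n → ℕ) (k : ℕ) :
    ∃ C > (0 : ℝ), ∀ ε : ℝ, 0 < ε → ε ≤ 1 → ∀ x ∈ K, ∀ (ξ : En n) (t : ℝ),
      ‖(DR n α β k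
            (fun p => ((ψ (ε • p.2.1, ε ^ w * p.2.2) : ℝ) : ℂ) * q (p.1, p.2.1, (p.2.2 : ℂ)))
            (x, ξ, t))‖
        ≤ C * ε * (1 + pnorm n w ξ (t : ℂ))
            ^ (m + 1 - (j : ℤ) - (∑ i, (β i : ℤ)) - (w : ℤ) * (k : ℤ)) :=
  stmt10_general n w hw2 U hU m j ψ hψ hψ0 hψ1 q hq K hK hKU α β k
end
end

section
/- (Mikayelyan's lemma.) Let q ∈ S^m_{‖v}(U×ℝ^{n+1}) with m ≤ −1, and for T > 0 set q^{(T)}(x,ξ,τ) = q(x,ξ,τ−iT). Then for every compact K ⊂ U, all multi-orders α, β ∈ ℕⁿ and every integer k ≥ 0 there is a constant C > 0, independent of T, such that for all T > 0: |∂_x^α ∂_ξ^β ∂_τ^k q^{(T)}(x,ξ,τ)| ≤ C·(1+T)^{−1/w}·(1+‖ξ,τ‖)^{m+1−|β|−wk} for all x ∈ K and (ξ,τ) ∈ ℝⁿ × cl C₋. -/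
noncomputable section

/-- The multi-index partial derivative `∂_x^α` in the first (space) variable. -/
def DxP (n : ℕ) (α : Fin n → ℕ) (f : Pn n → ℂ) : Pn n → ℂ :=
  (List.finRange n).foldr
    (fun i g => (pd ((EuclideanSpace.single i (1 : ℝ) : En n), (0 : En n), (0 : ℂ)))^[α i] g) f

/-- The multi-index partial derivative `∂_ξ^β` in the second (covariable) variable. -/
def DxiP (n : ℕ) (β : Fin n → ℕ) (f : Pn n → ℂ) : Pn n → ℂ :=
  (List.finRange n).foldr
    (fun i g => (pd ((0 : En n), (EuclideanSpace.single i (1 : ℝ) : En n), (0 : ℂ)))^[β i] g) f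

/-- The iterated derivative `∂_τ^k`, taken along the real direction in `τ`. -/
def DtP (n : ℕ) (k : ℕ) (f : Pn n → ℂ) : Pn n → ℂ :=
  (pd ((0 : En n), (0 : En n), (1 : ℂ)))^[k] f

/-- `∂_x^α ∂_ξ^β ∂_τ^k`. -/
def DP (n : ℕ) (α β : Fin n → ℕ) (k : ℕ) (f : Pn n → ℂ) : Pn n → ℂ :=
  DxP n α (DxiP n β (DtP n k f))

/-- The class `S^m_{‖v}(U×ℝ^{n+1})` of (non-polyhomogeneous) Volterra symbols of order
`m ∈ ℝ`: smooth on `U × ℝⁿ × cl C₋`, holomorphic in `τ ∈ C₋` for fixed `(x,ξ)`, with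
`|∂_x^α ∂_ξ^β ∂_τ^k q| ≤ C·(1+‖ξ,τ‖)^{m−|β|−wk}` locally uniformly in `x`. -/
def SymV (n w : ℕ) (U : Set (En n)) (m : ℝ) (q : Pn n → ℂ) : Prop :=
  ContDiffOn ℝ (⊤ : ℕ∞) q {p : Pn n | p.1 ∈ U ∧ p.2.2.im ≤ 0}
    ∧ (∀ x ∈ U, ∀ ξ : En n,
        DifferentiableOn ℂ (fun τ => q (x, ξ, τ)) {τ : ℂ | τ.im < 0})
    ∧ ∀ (K : Set (En n)), IsCompact K → K ⊆ U → ∀ (α β : Fin n → ℕ) (k : ℕ),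
        ∃ C > (0 : ℝ), ∀ x ∈ K, ∀ (ξ : En n) (τ : ℂ), τ.im ≤ 0 →
          ‖DP n α β k q (x, ξ, τ)‖
            ≤ C * (1 + pnorm n w ξ τ) ^ (m - (∑ i, (β i : ℝ)) - (w : ℝ) * (k : ℝ))


/-!
Shifting `τ` by `-iT` commutes with every derivative in `DP`, so the derivatives of `q^{(T)}`
are those of `q` evaluated at `(x, ξ, τ - iT)`, where the symbol estimate gives the factor
`(1 + ‖ξ, τ - iT‖)^{m - |β| - wk}`. Moving `τ` further into `C₋` does not decrease `|τ|`, so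
`‖ξ, τ‖ ≤ ‖ξ, τ - iT‖`, and `|τ - iT| ≥ T` gives `(1 + T)^{1/w} ≤ 1 + ‖ξ, τ - iT‖`. Splitting off
one power of `1 + ‖ξ, τ - iT‖` therefore yields the gain `(1 + T)^{-1/w}`, and the remaining
power, whose exponent is `≤ 0` because `m ≤ -1`, is bounded by the same power of `1 + ‖ξ, τ‖`.
-/

open Complex

section Translation

variable {V : Type*} [NormedAddCommGroup V] [NormedSpace ℝ V]

lemma pd_comp_add_const (v c : V) (f : V → ℂ) :
    pd v (fun p => f (p + c)) = fun p => pd v f (p + c) := by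
  funext p
  unfold pd lineDeriv
  simp only [add_right_comm]

lemma iterate_pd_comp_add_const (v c : V) (k : ℕ) (f : V → ℂ) :
    (pd v)^[k] (fun p => f (p + c)) = fun p => (pd v)^[k] f (p + c) := by
  induction k generalizing f with
  | zero => rfl
  | succ k ih => rw [Function.iterate_succ_apply, pd_comp_add_const, ih]; rfl

lemma foldr_iterate_pd_comp_add_const {ι : Type*} (v : ι → V) (γ : ι → ℕ) (c : V)
    (l : List ι) (f : V → ℂ) :
    l.foldr (fun i g => (pd (v i))^[γ i] g) (fun p => f (p + c))
      = fun p => l.foldr (fun i g => (pd (v i))^[γ i] g) f (p + c) := by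
  induction l with
  | nil => rfl
  | cons i l ih => simp only [List.foldr_cons, ih, iterate_pd_comp_add_const]

end Translation

lemma DP_comp_add_const {n : ℕ} (α β : Fin n → ℕ) (k : ℕ) (c : Pn n) (f : Pn n → ℂ) :
    DP n α β k (fun p => f (p + c)) = fun p => DP n α β k f (p + c) := by
  unfold DP DxP DxiP DtP
  rw [iterate_pd_comp_add_const, foldr_iterate_pd_comp_add_const,
    foldr_iterate_pd_comp_add_const]

section LowerHalfPlane

variable {τ : ℂ} {T : ℝ}

lemma norm_le_norm_sub_I_mul (hτ : τ.im ≤ 0) (hT : 0 ≤ T) : ‖τ‖ ≤ ‖τ - I * T‖ := by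
  rw [norm_eq_sqrt_sq_add_sq, norm_eq_sqrt_sq_add_sq]
  refine Real.sqrt_le_sqrt ?_
  simp only [sub_re, sub_im, mul_re, mul_im, I_re, I_im, ofReal_re, ofReal_im]
  nlinarith

lemma le_norm_sub_I_mul (hτ : τ.im ≤ 0) : T ≤ ‖τ - I * T‖ := by
  have h : |τ.im - T| ≤ ‖τ - I * T‖ := by simpa using abs_im_le_norm (τ - I * T)
  linarith [neg_le_abs (τ.im - T)]

variable {n w : ℕ} (ξ : En n)

lemma pnorm_le_pnorm_sub_I_mul (hτ : τ.im ≤ 0) (hT : 0 ≤ T) :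
    pnorm n w ξ τ ≤ pnorm n w ξ (τ - I * T) := by
  unfold pnorm
  gcongr
  exact norm_le_norm_sub_I_mul hτ hT

lemma one_add_rpow_inv_le_one_add_pnorm (hw : 1 ≤ w) (hτ : τ.im ≤ 0) (hT : 0 ≤ T) :
    (1 + T) ^ (w : ℝ)⁻¹ ≤ 1 + pnorm n w ξ (τ - I * T) := by
  have hw₀ : (0 : ℝ) ≤ (w : ℝ)⁻¹ := by positivity
  have hw₁ : (w : ℝ)⁻¹ ≤ 1 := inv_le_one_of_one_le₀ (by exact_mod_cast hw)
  calc (1 + T) ^ (w : ℝ)⁻¹ ≤ 1 ^ (w : ℝ)⁻¹ + T ^ (w : ℝ)⁻¹ :=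
        Real.rpow_add_le_add_rpow zero_le_one hT hw₀ hw₁
    _ ≤ 1 + pnorm n w ξ (τ - I * T) := by
        rw [Real.one_rpow, pnorm]
        gcongr
        linarith [le_norm_sub_I_mul (T := T) hτ, pow_nonneg (norm_nonneg ξ) w]

end LowerHalfPlane

lemma one_add_rpow_sub_one_le {P P' A e : ℝ} (hP : 0 ≤ P) (hPP' : P ≤ P') (hA : 0 < A)
    (hAP' : A ≤ 1 + P') (he : e ≤ 0) :
    (1 + P') ^ (e - 1) ≤ A⁻¹ * (1 + P) ^ e := by
  have hP' : 0 < 1 + P' := by linarith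
  rw [Real.rpow_sub_one hP'.ne', div_eq_inv_mul]
  exact mul_le_mul (inv_anti₀ hA hAP')
    (Real.rpow_le_rpow_of_nonpos (by linarith) (by linarith) he) (by positivity) (by positivity)

theorem stmt12_general (n w : ℕ) (hw2 : 2 ≤ w)
    (U : Set (En n)) (m : ℝ) (hm : m ≤ -1)
    (q : Pn n → ℂ) (hq : SymV n w U m q)
    (K : Set (En n)) (hK : IsCompact K) (hKU : K ⊆ U)
    (α β : Fin n → ℕ) (k : ℕ) :
    ∃ C > (0 : ℝ), ∀ T : ℝ, 0 < T → ∀ x ∈ K, ∀ (ξ : En n) (τ : ℂ), τ.im ≤ 0 →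
      ‖DP n α β k (fun p => q (p.1, p.2.1, p.2.2 - Complex.I * T)) (x, ξ, τ)‖
        ≤ C * (1 + T) ^ (-(w : ℝ)⁻¹)
            * (1 + pnorm n w ξ τ) ^ (m + 1 - (∑ i, (β i : ℝ)) - (w : ℝ) * (k : ℝ)) := by
  obtain ⟨C, hC, hbound⟩ := hq.2.2 K hK hKU α β k
  refine ⟨C, hC, fun T hT x hx ξ τ hτ => ?_⟩
  set e := m + 1 - (∑ i, (β i : ℝ)) - (w : ℝ) * (k : ℝ)
  have he : e ≤ 0 := by
    have : 0 ≤ ∑ i, (β i : ℝ) := Finset.sum_nonneg fun i _ => by positivity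
    have : (0 : ℝ) ≤ (w : ℝ) * (k : ℝ) := by positivity
    linarith
  have hshift : DP n α β k (fun p => q (p.1, p.2.1, p.2.2 - I * T)) (x, ξ, τ)
      = DP n α β k q (x, ξ, τ - I * T) := by
    rw [show (fun p : Pn n => q (p.1, p.2.1, p.2.2 - I * T))
        = fun p => q (p + (0, 0, -(I * T))) by funext ⟨_, _, _⟩; simp [sub_eq_add_neg],
      DP_comp_add_const]
    simp [sub_eq_add_neg]
  have hτT : (τ - I * T).im ≤ 0 := by
    simp only [sub_im, mul_im, I_re, I_im, ofReal_re, ofReal_im]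
    linarith
  rw [hshift, Real.rpow_neg (by linarith), mul_assoc]
  calc ‖DP n α β k q (x, ξ, τ - I * T)‖
      ≤ C * (1 + pnorm n w ξ (τ - I * T)) ^ (e - 1) := by
        convert hbound x hx ξ _ hτT using 3; ring
    _ ≤ C * (((1 + T) ^ (w : ℝ)⁻¹)⁻¹ * (1 + pnorm n w ξ τ) ^ e) := by
        gcongr
        exact one_add_rpow_sub_one_le (Real.rpow_nonneg (by positivity) _)
          (pnorm_le_pnorm_sub_I_mul ξ hτ hT.le) (by positivity)
          (one_add_rpow_inv_le_one_add_pnorm ξ (by omega) hτ hT.le) he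

/-- Mikayelyan's lemma: if `q ∈ S^m_{‖v}(U×ℝ^{n+1})` with `m ≤ −1` and
`q^{(T)}(x,ξ,τ) = q(x,ξ,τ−iT)`, then for every compact `K ⊂ U`, `α`, `β`, `k` there is
`C > 0`, independent of `T`, such that for all `T > 0`:
`|∂_x^α ∂_ξ^β ∂_τ^k q^{(T)}(x,ξ,τ)| ≤ C·(1+T)^{−1/w}·(1+‖ξ,τ‖)^{m+1−|β|−wk}` for `x ∈ K`
and `(ξ,τ) ∈ ℝⁿ × cl C₋`. -/
theorem stmt12 (n w : ℕ) (hn : 1 ≤ n) (hw : Even w) (hw2 : 2 ≤ w)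
    (U : Set (En n)) (hU : IsOpen U) (m : ℝ) (hm : m ≤ -1)
    (q : Pn n → ℂ) (hq : SymV n w U m q)
    (K : Set (En n)) (hK : IsCompact K) (hKU : K ⊆ U)
    (α β : Fin n → ℕ) (k : ℕ) :
    ∃ C > (0 : ℝ), ∀ T : ℝ, 0 < T → ∀ x ∈ K, ∀ (ξ : En n) (τ : ℂ), τ.im ≤ 0 →
      ‖DP n α β k (fun p => q (p.1, p.2.1, p.2.2 - Complex.I * T)) (x, ξ, τ)‖
        ≤ C * (1 + T) ^ (-(w : ℝ)⁻¹)
            * (1 + pnorm n w ξ τ) ^ (m + 1 - (∑ i, (β i : ℝ)) - (w : ℝ) * (k : ℝ)) :=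
  stmt12_general n w hw2 U m hm q hq K hK hKU α β k
end
end
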